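/- arXiv:2303.12880 — 4 statements merged into one kernel-verified Lean document; each statement's English description precedes it below -/
import Mathlib

section
/- Let T be a truss, e, e' ∈ T, n ∈ ℕ and f ∈ C^n(T). Define g ∈ C^n(T) by g(x_1,…,x_n) = [f(x_1,…,x_n), e', e]. Then for all a_0,…,a_n ∈ T, δ^n_{e'} f(a_0,…,a_n) = [δ^n_e g(a_0,…,a_n), e, e']. -/
/-- A truss: an abelian heap with an associative multiplication distributing
over the ternary heap operation on both sides. -/
class Truss (T : Type*) extends Mul T where
  hbr : T → T → T → T
  hbr_assoc : ∀ a b c d f : T, hbr (hbr a b c) d f = hbr a b (hbr c d f)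
  hbr_idl : ∀ a b : T, hbr a a b = b
  hbr_idr : ∀ a b : T, hbr b a a = b
  hbr_comm : ∀ a b c : T, hbr a b c = hbr c b a
  mul_assoc' : ∀ a b c : T, a * b * c = a * (b * c)
  mul_hbr_left : ∀ a b c d : T, a * hbr b c d = hbr (a * b) (a * c) (a * d)
  mul_hbr_right : ∀ a b c d : T, hbr b c d * a = hbr (b * a) (c * a) (d * a)

open Truss

section Cochains

variable {T : Type*} [Truss T]

/-- Negation in the retract group `G(T;e)`. -/
def gneg (e x : T) : T := hbr e x e

/-- Addition in the retract group `G(T;e)`. -/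
def gadd (e x y : T) : T := hbr x e y

/-- Sum of a list of elements in the retract group `G(T;e)`. -/
def gsum (e : T) : List T → T
  | [] => e
  | x :: xs => gadd e x (gsum e xs)

/-- `(-1)^k • x` in the retract group `G(T;e)`. -/
def spow (e : T) (k : ℕ) (x : T) : T := if k % 2 = 0 then x else gneg e x

/-- `n`-cochains on a truss `T`: functions `T^n → T`. -/
abbrev Cochain (T : Type*) (n : ℕ) := (Fin n → T) → T

/-- A cochain belongs to `C^n(T)` when it is a heap homomorphism in each argument. -/
def IsMultiHeap {T : Type*} [Truss T] {n : ℕ} (f : Cochain T n) : Prop :=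
  ∀ (i : Fin n) (a : Fin n → T) (x y z : T),
    f (Function.update a i (hbr x y z)) =
      hbr (f (Function.update a i x)) (f (Function.update a i y))
        (f (Function.update a i z))

/-- The argument tuple `(a_0, …, a_{i-1} a_i, …, a_n)` of the `i`-th inner face. -/
def faceArg {n : ℕ} (i : Fin n) (a : Fin (n + 1) → T) : Fin n → T :=
  fun j =>
    if (j : ℕ) < (i : ℕ) then a j.castSucc
    else if j = i then a j.castSucc * a j.succ
    else a j.succ

/-- The `e`-relative Hochschild coboundary
`δ^n_e f(a_0,…,a_n) = -a_0 e + a_0 f(a_1,…,a_n) + Σ_{i=1}^n (-1)^i f(a_0,…,a_{i-1}a_i,…,a_n)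
  + (-1)^{n+1} f(a_0,…,a_{n-1}) a_n + (-1)^n e a_n`,
with all operations in the retract group `G(T;e)`. -/
def delta (e : T) {n : ℕ} (f : Cochain T n) : Cochain T (n + 1) :=
  fun a =>
    gsum e
      ([gneg e (a 0 * e), a 0 * f (fun i => a i.succ)]
        ++ List.ofFn (fun i : Fin n => spow e ((i : ℕ) + 1) (f (faceArg i a)))
        ++ [spow e (n + 1) (f (fun i => a i.castSucc) * a (Fin.last n)),
            spow e n (e * a (Fin.last n))])

end Cochains

/-!
Evaluate everything in the retract group `G(T;e)`, where `[x,y,z] = x - y + z`. There the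
`c`-relative sum `gsum c L` satisfies `gsum c L - c = Σ_{x ∈ L} (x - c)`, so `δ_c f(a) - c` is an
alternating sum of differences `t - c`. For `c = e'` and `c = e` with `g = f - e' + e`, the inner
faces agree term by term, and by the distributive laws the two outer pairs of terms both
contribute `a_0 f(a_1,…,a_n) - a_0 e'` and `(-1)^{n+1} (f(a_0,…,a_{n-1}) a_n - e' a_n)`.
Hence `δ_{e'} f(a) - e' = δ_e g(a) - e`.
-/

namespace Truss

variable {T : Type*} [Truss T]

def Retract (T : Type*) [Truss T] (_e : T) : Type _ := T

def Retract.mk (e x : T) : Retract T e := x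

def Retract.out {e : T} (x : Retract T e) : T := x

instance (e : T) : Zero (Retract T e) := ⟨Retract.mk e e⟩
instance (e : T) : Add (Retract T e) := ⟨fun x y => Retract.mk e (hbr x.out e y.out)⟩
instance (e : T) : Neg (Retract T e) := ⟨fun x => Retract.mk e (hbr e x.out e)⟩

instance (e : T) : AddCommGroup (Retract T e) where
  add_assoc x y z := hbr_assoc x.out e y.out e z.out
  zero_add x := hbr_idl e x.out
  add_zero x := hbr_idr e x.out
  add_comm x y := hbr_comm x.out e y.out
  neg_add_cancel x := by
    change hbr (hbr e x.out e) e x.out = e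
    rw [hbr_assoc, hbr_idl, hbr_comm, hbr_idl]
  nsmul := nsmulRec
  zsmul := zsmulRec

theorem Retract.mk_self (e : T) : Retract.mk e e = 0 := rfl

theorem Retract.mk_hbr (e x y z : T) :
    Retract.mk e (hbr x y z) = Retract.mk e x - Retract.mk e y + Retract.mk e z := by
  change hbr x y z = hbr (hbr x e (hbr e y e)) e z
  rw [hbr_assoc, hbr_assoc, hbr_idl, ← hbr_assoc x e e, hbr_idr]

theorem Retract.mk_injective (e : T) : Function.Injective (Retract.mk e) := fun _ _ h => h

theorem Retract.mk_gsum_sub (e c : T) (L : List T) :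
    Retract.mk e (gsum c L) - Retract.mk e c
      = (L.map fun x => Retract.mk e x - Retract.mk e c).sum := by
  induction L with
  | nil => simp [gsum]
  | cons x L ih =>
    rw [List.map_cons, List.sum_cons, ← ih, gsum, gadd, mk_hbr]
    abel

theorem Retract.mk_spow_sub (e c : T) (k : ℕ) (x : T) :
    Retract.mk e (spow c k x) - Retract.mk e c
      = (-1 : ℤ) ^ k • (Retract.mk e x - Retract.mk e c) := by
  rcases Nat.even_or_odd k with hk | hk
  · rw [spow, if_pos (Nat.even_iff.mp hk), hk.neg_one_pow, one_zsmul]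
  · rw [spow, if_neg (by rw [Nat.odd_iff.mp hk]; exact one_ne_zero), hk.neg_one_pow, gneg,
      mk_hbr]
    abel

theorem Retract.mk_delta_sub (e c : T) {n : ℕ} (f : Cochain T n) (a : Fin (n + 1) → T) :
    Retract.mk e (delta c f a) - Retract.mk e c
      = (Retract.mk e (a 0 * f (fun i => a i.succ)) - Retract.mk e (a 0 * c))
        + ∑ i : Fin n, (-1 : ℤ) ^ ((i : ℕ) + 1) • (Retract.mk e (f (faceArg i a)) - Retract.mk e c)
        + (-1 : ℤ) ^ (n + 1) • (Retract.mk e (f (fun i => a i.castSucc) * a (Fin.last n))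
            - Retract.mk e (c * a (Fin.last n))) := by
  simp only [delta, mk_gsum_sub, List.map_append, List.map_cons, List.map_nil, List.map_ofFn,
    List.sum_append, List.sum_cons, List.sum_nil, List.sum_ofFn, Function.comp_def,
    mk_spow_sub, gneg, mk_hbr]
  rw [pow_succ]
  module

end Truss

theorem delta_translate_general {T : Type*} [Truss T] (e e' : T) (n : ℕ)
    (f : Cochain T n) :
    ∀ a : Fin (n + 1) → T,
      delta e' f a = hbr (delta e (fun x => hbr (f x) e' e) a) e e' := by
  intro a
  apply Retract.mk_injective e
  rw [eq_add_of_sub_eq (Retract.mk_delta_sub e e' f a), Retract.mk_hbr,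
    eq_add_of_sub_eq (Retract.mk_delta_sub e e (fun x => hbr (f x) e' e) a)]
  simp only [mul_hbr_left, mul_hbr_right, Retract.mk_hbr, Retract.mk_self, add_zero, sub_zero]
  module

/-- For a truss `T`, `e, e' ∈ T`, `n ∈ ℕ` and `f ∈ C^n(T)`, setting
`g(x_1,…,x_n) = [f(x_1,…,x_n), e', e]`, one has
`δ^n_{e'} f(a_0,…,a_n) = [δ^n_e g(a_0,…,a_n), e, e']` for all `a_0,…,a_n ∈ T`. -/
theorem delta_translate {T : Type*} [Truss T] (e e' : T) (n : ℕ)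
    (f : Cochain T n) (hf : IsMultiHeap f) :
    ∀ a : Fin (n + 1) → T,
      delta e' f a = hbr (delta e (fun x => hbr (f x) e' e) a) e e' :=
  delta_translate_general e e' n f
end

section
/- Let T be a truss, N : T → T a heap endomorphism, and e ∈ T. Then the Nijenhuis product a ∘_N b = [N(a)b, N(ab), aN(b)] distributes over the heap operation on both sides, and ∘_N is associative if and only if the e-Nijenhuis torsion T^e_N is an e-relative Hochschild 2-cocycle, i.e. if and only if for all a,b,c ∈ T, [e, ae, a·T^e_N(b,c), T^e_N(ab,c), T^e_N(a,bc), T^e_N(a,b)·c, ec] = e. -/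
open Truss

variable {T : Type*} [Truss T]

/-- The Nijenhuis product `a ∘_N b = [N(a)b, N(ab), aN(b)]`. -/
def nijProd (N : T → T) (a b : T) : T :=
  hbr (N a * b) (N (a * b)) (a * N b)

/-- The `e`-Nijenhuis torsion `T^e_N(a,b) = [N(a ∘_N b), N(a)N(b), e]`. -/
def nijTorsion (N : T → T) (e a b : T) : T :=
  hbr (N (nijProd N a b)) (N a * N b) e

/-
Fixing a point `e`, the abelian heap `T` becomes an abelian group with `x + y = [x, e, y]`,
zero `e` and `[x, y, z] = x - y + z`. Both sides of a truss multiplication and the heap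
endomorphism `N` distribute over brackets, so every expression in sight expands into a
bracket of products of `a, b, c, e` and values of `N` on such products, and the claimed
identities become identities of abelian groups. Distributivity of `∘_N` is the medial law
`[[a,b,c],[d,f,g],[h,i,j]] = [[a,d,h],[b,f,i],[c,g,j]]`, and the coboundary of the torsion
expands to `[a ∘_N (b ∘_N c), (a ∘_N b) ∘_N c, e]`, which equals `e` exactly when `∘_N` is
associative at `(a, b, c)`.
-/

namespace Truss

abbrev retract (e : T) : AddCommGroup T :=
  letI : Zero T := ⟨e⟩
  letI : Add T := ⟨fun x y => hbr x e y⟩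
  letI : Neg T := ⟨fun x => hbr e x e⟩
  { add_assoc x y z := hbr_assoc x e y e z
    zero_add := hbr_idl e
    add_zero := hbr_idr e
    nsmul := nsmulRec
    zsmul := zsmulRec
    neg_add_cancel x := by
      change hbr (hbr e x e) e x = e
      rw [hbr_assoc, hbr_idl, hbr_idr]
    add_comm x y := hbr_comm x e y }

theorem hbr_eq_sub_add (e x y z : T) :
    letI := retract e
    hbr x y z = x - y + z := by
  let := retract e
  change hbr x y z = hbr (hbr x e (hbr e y e)) e z
  rw [hbr_assoc, hbr_assoc, hbr_idl, ← hbr_assoc, hbr_idr]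

theorem hbr_hbr_hbr_comm (a b c d f g h i j : T) :
    hbr (hbr a b c) (hbr d f g) (hbr h i j) = hbr (hbr a d h) (hbr b f i) (hbr c g j) := by
  let := retract a
  simp only [hbr_eq_sub_add a]
  abel

theorem hbr_eq_right_iff {x y z : T} : hbr x y z = z ↔ x = y := by
  refine ⟨fun h => ?_, fun h => h ▸ hbr_idl y z⟩
  calc x = hbr (hbr x y z) z y := by rw [hbr_assoc, hbr_idl, hbr_idr]
    _ = y := by rw [h, hbr_idl]

/-- The `e`-relative Hochschild coboundary `δ²_e` on 2-cochains. -/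
def hochschildCoboundary (e : T) (f : T → T → T) (a b c : T) : T :=
  hbr e (a * e) (hbr (a * f b c) (f (a * b) c) (hbr (f a (b * c)) (f a b * c) (e * c)))

theorem nijProd_hbr_right {N : T → T} (hN : ∀ a b c : T, N (hbr a b c) = hbr (N a) (N b) (N c))
    (w x y z : T) :
    nijProd N w (hbr x y z) = hbr (nijProd N w x) (nijProd N w y) (nijProd N w z) := by
  simp only [nijProd, mul_hbr_left, hN]
  exact hbr_hbr_hbr_comm ..

theorem nijProd_hbr_left {N : T → T} (hN : ∀ a b c : T, N (hbr a b c) = hbr (N a) (N b) (N c))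
    (w x y z : T) :
    nijProd N (hbr x y z) w = hbr (nijProd N x w) (nijProd N y w) (nijProd N z w) := by
  simp only [nijProd, mul_hbr_right, hN]
  exact hbr_hbr_hbr_comm ..

theorem hochschildCoboundary_nijTorsion {N : T → T}
    (hN : ∀ a b c : T, N (hbr a b c) = hbr (N a) (N b) (N c))
    (e a b c : T) :
    hochschildCoboundary e (nijTorsion N e) a b c =
      hbr (nijProd N a (nijProd N b c)) (nijProd N (nijProd N a b) c) e := by
  simp only [hochschildCoboundary, nijTorsion, nijProd, mul_hbr_left, mul_hbr_right, hN,
    mul_assoc']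
  let := retract e
  simp only [hbr_eq_sub_add e]
  abel

end Truss

/-- Let `T` be a truss, `N : T → T` a heap endomorphism and `e ∈ T`.
Then the Nijenhuis product distributes over the heap operation on both sides, and it
is associative if and only if the `e`-Nijenhuis torsion is an `e`-relative Hochschild
2-cocycle, i.e. `[e, ae, aT^e_N(b,c), T^e_N(ab,c), T^e_N(a,bc), T^e_N(a,b)c, ec] = e`
for all `a, b, c ∈ T`. -/
theorem nijProd_assoc_iff_torsion_cocycle (T : Type*) [Truss T] (N : T → T)
    (hN : ∀ a b c : T, N (hbr a b c) = hbr (N a) (N b) (N c)) (e : T) :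
    (∀ w x y z : T, nijProd N w (hbr x y z) =
      hbr (nijProd N w x) (nijProd N w y) (nijProd N w z)) ∧
    (∀ w x y z : T, nijProd N (hbr x y z) w =
      hbr (nijProd N x w) (nijProd N y w) (nijProd N z w)) ∧
    ((∀ a b c : T, nijProd N (nijProd N a b) c = nijProd N a (nijProd N b c)) ↔
      ∀ a b c : T,
        hbr e (a * e)
          (hbr (a * nijTorsion N e b c) (nijTorsion N e (a * b) c)
            (hbr (nijTorsion N e a (b * c)) (nijTorsion N e a b * c) (e * c))) = e) := by
  refine ⟨nijProd_hbr_right hN, nijProd_hbr_left hN, forall₃_congr fun a b c => ?_⟩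
  change _ ↔ hochschildCoboundary e (nijTorsion N e) a b c = e
  rw [hochschildCoboundary_nijTorsion hN, hbr_eq_right_iff, eq_comm]
end

section
/- Let T be a truss and N a Nijenhuis operator on T. Then for every k ∈ ℕ the k-fold composite N^k (with N^0 = id) is a Nijenhuis operator on T: N^k([N^k(a)b, N^k(ab), aN^k(b)]) = N^k(a)N^k(b) for all a,b ∈ T. -/
open Truss

variable {T : Type*} [Truss T]

/-- `N` is a heap endomorphism of the truss `T`. -/
def IsHeapEndo (N : T → T) : Prop :=
  ∀ a b c : T, N (hbr a b c) = hbr (N a) (N b) (N c)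

/-- `N` is a Nijenhuis operator: a heap endomorphism with `N(a ∘_N b) = N(a)N(b)`. -/
def IsNijenhuis (N : T → T) : Prop :=
  IsHeapEndo N ∧ ∀ a b : T, N (nijProd N a b) = N a * N b

namespace Truss

theorem exists_addCommGroup_hbr_eq (e : T) :
    ∃ _ : AddCommGroup T, ∀ x y z : T, hbr x y z = x - y + z := by
  let _ : Zero T := ⟨e⟩
  let _ : Add T := ⟨fun x y => hbr x e y⟩
  let _ : Neg T := ⟨fun x => hbr e x e⟩
  let G : AddCommGroup T :=
    { add_assoc := fun x y z => hbr_assoc x e y e z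
      zero_add := hbr_idl e
      add_zero := hbr_idr e
      add_comm := fun x y => hbr_comm x e y
      neg_add_cancel := fun x => by
        change hbr (hbr e x e) e x = e
        rw [hbr_assoc, hbr_idl, hbr_idr]
      nsmul := nsmulRec
      zsmul := zsmulRec }
  refine ⟨G, fun x y z => ?_⟩
  change hbr x y z = hbr (hbr x e (hbr e y e)) e z
  rw [hbr_assoc, hbr_assoc, hbr_idl, ← hbr_assoc, hbr_idr]

end Truss

section CentredGroup

variable [AddCommGroup T] (hT : ∀ x y z : T, hbr x y z = x - y + z)
include hT

theorem Truss.mul_sub_add (p x y z : T) : p * (x - y + z) = p * x - p * y + p * z := by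
  rw [← hT, ← hT, mul_hbr_left]

theorem Truss.sub_add_mul (p x y z : T) : (x - y + z) * p = x * p - y * p + z * p := by
  rw [← hT, ← hT, mul_hbr_right]

theorem IsHeapEndo.map_sub_add {N : T → T} (hN : IsHeapEndo N) (x y z : T) :
    N (x - y + z) = N x - N y + N z := by
  rw [← hT, ← hT, hN]

theorem nijProd_eq_sub_add (N : T → T) (a b : T) :
    nijProd N a b = N a * b - N (a * b) + a * N b :=
  hT _ _ _

end CentredGroup

variable {N : T → T}

theorem IsNijenhuis.nijProd_assoc (hN : IsNijenhuis N) (a b c : T) :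
    nijProd N (nijProd N a b) c = nijProd N a (nijProd N b c) := by
  obtain ⟨_, hT⟩ := exists_addCommGroup_hbr_eq a
  have hab := congrArg (· * c) (hN.2 a b)
  have hbc := congrArg (a * ·) (hN.2 b c)
  have hab_c := hN.2 (a * b) c
  have ha_bc := hN.2 a (b * c)
  simp only [nijProd_eq_sub_add hT, hN.1.map_sub_add hT, mul_sub_add hT, sub_add_mul hT,
    mul_assoc'] at hab hbc hab_c ha_bc ⊢
  linear_combination (norm := abel) hab - hbc + hab_c - ha_bc

theorem IsHeapEndo.nijProd_hbr (hN : IsHeapEndo N) (a x y z : T) :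
    nijProd N a (hbr x y z) = hbr (nijProd N a x) (nijProd N a y) (nijProd N a z) := by
  obtain ⟨_, hT⟩ := exists_addCommGroup_hbr_eq a
  simp only [nijProd_eq_sub_add hT, hT, hN.map_sub_add hT, mul_sub_add hT]
  abel

theorem IsHeapEndo.hbr_nijProd (hN : IsHeapEndo N) (a x y z : T) :
    nijProd N (hbr x y z) a = hbr (nijProd N x a) (nijProd N y a) (nijProd N z a) := by
  obtain ⟨_, hT⟩ := exists_addCommGroup_hbr_eq a
  simp only [nijProd_eq_sub_add hT, hT, hN.map_sub_add hT, sub_add_mul hT]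
  abel

theorem IsHeapEndo.iterate (hN : IsHeapEndo N) (k : ℕ) : IsHeapEndo N^[k] := by
  induction k with
  | zero => exact fun _ _ _ => rfl
  | succ k ih => intro a b c; simp only [Function.iterate_succ_apply', ih a b c, hN _ _ _]

abbrev IsNijenhuis.deformedTruss (hN : IsNijenhuis N) : Truss T where
  mul := nijProd N
  hbr := hbr
  hbr_assoc := hbr_assoc
  hbr_idl := hbr_idl
  hbr_idr := hbr_idr
  hbr_comm := hbr_comm
  mul_assoc' := hN.nijProd_assoc
  mul_hbr_left := hN.1.nijProd_hbr
  mul_hbr_right := hN.1.hbr_nijProd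

theorem IsNijenhuis.isNijenhuis_deformedTruss (hN : IsNijenhuis N) :
    @IsNijenhuis T hN.deformedTruss N := by
  refine ⟨hN.1, fun a b => ?_⟩
  change N (hbr (nijProd N (N a) b) (N (nijProd N a b)) (nijProd N a (N b))) =
    nijProd N (N a) (N b)
  rw [hN.1, hN.2, hN.2, hN.2]
  rfl

/-- In the group centred at any point: `N (a ∘_M b) + M (a ∘_N b) = N a * M b + M a * N b`. -/
def NijenhuisCompatible (N M : T → T) : Prop :=
  ∀ a b : T, hbr (N (nijProd M a b)) (N a * M b) (M (nijProd N a b)) = M a * N b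

theorem NijenhuisCompatible.hbr_nijProd_nijProd {M : T → T} (hNM : NijenhuisCompatible N M)
    (hN : IsHeapEndo N) (hM : IsHeapEndo M) (hcomm : Function.Commute N M) (a b : T) :
    hbr (nijProd N (M a) b) (M (nijProd N a b)) (nijProd N a (M b)) = nijProd (N ∘ M) a b := by
  obtain ⟨_, hT⟩ := exists_addCommGroup_hbr_eq a
  have h := hNM a b
  simp only [nijProd_eq_sub_add hT, hT, hN.map_sub_add hT, hM.map_sub_add hT,
    Function.comp_apply, hcomm _] at h ⊢
  linear_combination (norm := abel) -h

theorem IsNijenhuis.nijenhuisCompatible_iterate (hN : IsNijenhuis N) (k : ℕ) :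
    NijenhuisCompatible N N^[k] := by
  induction k with
  | zero =>
    intro a b
    obtain ⟨_, hT⟩ := exists_addCommGroup_hbr_eq a
    simp only [Function.iterate_zero, id, nijProd_eq_sub_add hT, sub_self, zero_add, hT]
    abel
  | succ k ih =>
    intro a b
    have h := congrArg N (ih.hbr_nijProd_nijProd hN.1 (hN.1.iterate k)
      (Function.Commute.self_iterate N k) a b)
    rw [hN.1, hN.2, hN.2, ← Function.iterate_succ'] at h
    simp only [← Function.iterate_succ_apply'] at h
    rw [← h, hbr_assoc, hbr_idl, hbr_idr]

theorem IsNijenhuis.nijProd_iterate_succ (hN : IsNijenhuis N) (k : ℕ) (a b : T) :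
    nijProd N^[k + 1] a b = @nijProd T hN.deformedTruss N^[k] a b := by
  rw [Function.iterate_succ', ← (hN.nijenhuisCompatible_iterate k).hbr_nijProd_nijProd hN.1
    (hN.1.iterate k) (Function.Commute.self_iterate N k)]
  rfl

theorem IsNijenhuis.iterate :
    ∀ (k : ℕ) {T : Type*} [Truss T] {N : T → T}, IsNijenhuis N → IsNijenhuis N^[k] := by
  intro k
  induction k with
  | zero => exact fun hN => ⟨fun _ _ _ => rfl, fun a b => hbr_idl (a * b) (a * b)⟩
  | succ k ih =>
    intro T _ N hN
    refine ⟨hN.1.iterate (k + 1), fun a b => ?_⟩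
    have hdeformed := (@ih T hN.deformedTruss N hN.isNijenhuis_deformedTruss).2 a b
    calc N^[k + 1] (nijProd N^[k + 1] a b)
        = N (N^[k] (@nijProd T hN.deformedTruss N^[k] a b)) := by
          rw [Function.iterate_succ_apply', hN.nijProd_iterate_succ]
      _ = N (nijProd N (N^[k] a) (N^[k] b)) := congrArg N hdeformed
      _ = N^[k + 1] a * N^[k + 1] b := by
          rw [hN.2, Function.iterate_succ_apply', Function.iterate_succ_apply']

/-- If `N` is a Nijenhuis operator on a truss `T`, then for every
`k ∈ ℕ` the `k`-fold composite `N^k` is a Nijenhuis operator: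
`N^k([N^k(a)b, N^k(ab), aN^k(b)]) = N^k(a)N^k(b)` for all `a, b ∈ T`. -/
theorem iterate_nijenhuis (T : Type*) [Truss T] (N : T → T) (hN : IsNijenhuis N)
    (k : ℕ) :
    ∀ a b : T,
      N^[k] (hbr (N^[k] a * b) (N^[k] (a * b)) (a * N^[k] b)) = N^[k] a * N^[k] b :=
  (IsNijenhuis.iterate k hN).2
end

section
/- Let F be a field, A an associative F-algebra regarded as an affine space over itself, and N an affine Nijenhuis operator on A. Write [x,y] = xy − yx and define [a,b]_N = [N(a),b] − (N([a,b]) − N(0)) + [a,N(b)]. Then: (i) the Nijenhuis product ∘_N is associative and affine in each argument, i.e. ((1−λ)a + λa') ∘_N b = (1−λ)(a ∘_N b) + λ(a' ∘_N b) and a ∘_N ((1−λ)b + λb') = (1−λ)(a ∘_N b) + λ(a ∘_N b') for all a,a',b,b' ∈ A and λ ∈ F; (ii) [a,b]_N = (a ∘_N b) − (b ∘_N a) for all a,b ∈ A; (iii) N([a,b]_N) − N(0) = [N(a), N(b)] for all a,b ∈ A. -/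
section Affine

variable (F : Type*) [Field F] {A : Type*} [NonUnitalRing A] [Module F A]
  [SMulCommClass F A A] [IsScalarTower F A A]

/-- A heap endomorphism of an abelian group: `N(a − b + c) = N(a) − N(b) + N(c)`. -/
def IsHeapEndoAdd {A : Type*} [AddCommGroup A] (N : A → A) : Prop :=
  ∀ a b c : A, N (a - b + c) = N a - N b + N c

/-- An affine map: a heap endomorphism preserving barycentric combinations. -/
def IsAffineMap {A : Type*} [AddCommGroup A] [Module F A] (N : A → A) : Prop :=
  IsHeapEndoAdd N ∧
    ∀ (l : F) (a b : A), N ((1 - l) • a + l • b) = (1 - l) • N a + l • N b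

/-- The Nijenhuis product `a ∘_N b = N(a)b − N(ab) + aN(b)`. -/
def anijProd {A : Type*} [NonUnitalRing A] (N : A → A) (a b : A) : A :=
  N a * b - N (a * b) + a * N b

/-- An affine Nijenhuis operator: an affine map with `N(a ∘_N b) = N(a)N(b)`. -/
def IsAffineNijenhuis (N : A → A) : Prop :=
  IsAffineMap F N ∧ ∀ a b : A, N (anijProd N a b) = N a * N b

/-- Compatibility of heap endomorphisms:
`N₁(a)N₂(b) = N₁(a ∘_{N₂} b) − N₂(a)N₁(b) + N₂(a ∘_{N₁} b)`. -/
def AreCompatibleAdd {A : Type*} [NonUnitalRing A] (N₁ N₂ : A → A) : Prop :=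
  ∀ a b : A,
    N₁ a * N₂ b = N₁ (anijProd N₂ a b) - N₂ a * N₁ b + N₂ (anijProd N₁ a b)

end Affine

/-!
For any heap endomorphism `N` of an associative algebra, the associator of `∘_N` is the
Hochschild coboundary of the torsion `T(a,b) = N(a)N(b) − N(a ∘_N b)`:
`(a ∘_N b) ∘_N c − a ∘_N (b ∘_N c) = aT(b,c) − T(ab,c) + T(a,bc) − T(a,b)c`.
This only uses that `N` splits three-term alternating sums `x − y + z`, so a Nijenhuis
operator (`T = 0`) makes `∘_N` associative. The bracket identities follow from
`N(x − y) − N(0) = (N(x) − N(0)) − (N(y) − N(0))`.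
-/

theorem IsHeapEndoAdd.map_sub {A : Type*} [AddCommGroup A] {N : A → A}
    (hN : IsHeapEndoAdd N) (x y : A) : N (x - y) = N x - N y + N 0 := by
  simpa using hN x y 0

section NonUnitalRing

variable {A : Type*} [NonUnitalRing A]

def nijenhuisTorsion (N : A → A) (a b : A) : A :=
  N a * N b - N (anijProd N a b)

theorem IsHeapEndoAdd.anijProd_assoc_sub {N : A → A} (hN : IsHeapEndoAdd N) (a b c : A) :
    anijProd N (anijProd N a b) c - anijProd N a (anijProd N b c) =
      a * nijenhuisTorsion N b c - nijenhuisTorsion N (a * b) c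
        + nijenhuisTorsion N a (b * c) - nijenhuisTorsion N a b * c := by
  have split : ∀ x y z : A, N (x - y + z) = N x - N y + N z := hN
  simp only [nijenhuisTorsion, anijProd, mul_sub, sub_mul, mul_add, add_mul, ← mul_assoc, split]
  abel

theorem IsHeapEndoAdd.commutator_eq_anijProd_sub {N : A → A} (hN : IsHeapEndoAdd N) (a b : A) :
    N a * b - b * N a - (N (a * b - b * a) - N 0) + (a * N b - N b * a) =
      anijProd N a b - anijProd N b a := by
  rw [hN.map_sub, anijProd, anijProd]
  abel

variable {F : Type*} [Field F] [Module F A]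

theorem IsAffineMap.anijProd_left [IsScalarTower F A A] {N : A → A} (hN : IsAffineMap F N)
    (l : F) (a a' b : A) :
    anijProd N ((1 - l) • a + l • a') b = (1 - l) • anijProd N a b + l • anijProd N a' b := by
  simp only [anijProd, add_mul, smul_mul_assoc, hN.2, smul_add, smul_sub]
  abel

theorem IsAffineMap.anijProd_right [SMulCommClass F A A] {N : A → A} (hN : IsAffineMap F N)
    (l : F) (a b b' : A) :
    anijProd N a ((1 - l) • b + l • b') = (1 - l) • anijProd N a b + l • anijProd N a b' := by
  simp only [anijProd, mul_add, mul_smul_comm, hN.2, smul_add, smul_sub]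
  abel

end NonUnitalRing

/-- Let `A` be an associative `F`-algebra regarded as an affine space
over itself, `N` an affine Nijenhuis operator on `A`, `[x,y] = xy − yx` and
`[a,b]_N = [N(a),b] − (N([a,b]) − N(0)) + [a,N(b)]`. Then: (i) the Nijenhuis product
`∘_N` is associative and affine in each argument; (ii) `[a,b]_N = a ∘_N b − b ∘_N a`;
(iii) `N([a,b]_N) − N(0) = [N(a),N(b)]`. -/
theorem affine_nijenhuis_lie_bracket {F : Type*} [Field F] {A : Type*}
    [NonUnitalRing A] [Module F A] [SMulCommClass F A A] [IsScalarTower F A A]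
    (N : A → A) (hN : IsAffineNijenhuis F N) :
    letI br : A → A → A := fun x y => x * y - y * x
    letI brN : A → A → A := fun a b => br (N a) b - (N (br a b) - N 0) + br a (N b)
    (∀ a b c : A, anijProd N (anijProd N a b) c = anijProd N a (anijProd N b c)) ∧
    (∀ (l : F) (a a' b : A),
      anijProd N ((1 - l) • a + l • a') b =
        (1 - l) • anijProd N a b + l • anijProd N a' b) ∧
    (∀ (l : F) (a b b' : A),
      anijProd N a ((1 - l) • b + l • b') =
        (1 - l) • anijProd N a b + l • anijProd N a b') ∧
    (∀ a b : A, brN a b = anijProd N a b - anijProd N b a) ∧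
    (∀ a b : A, N (brN a b) - N 0 = br (N a) (N b)) := by
  obtain ⟨hAffine, hNij⟩ := hN
  have hHeap : IsHeapEndoAdd N := hAffine.1
  have hTorsion (a b : A) : nijenhuisTorsion N a b = 0 := sub_eq_zero.2 (hNij a b).symm
  refine ⟨fun a b c => ?_, hAffine.anijProd_left, hAffine.anijProd_right,
    hHeap.commutator_eq_anijProd_sub, fun a b => ?_⟩
  · rw [← sub_eq_zero, hHeap.anijProd_assoc_sub]
    simp only [hTorsion, mul_zero, zero_mul, sub_zero, add_zero]
  · show N (N a * b - b * N a - (N (a * b - b * a) - N 0) + (a * N b - N b * a)) - N 0 =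
      N a * N b - N b * N a
    rw [hHeap.commutator_eq_anijProd_sub, hHeap.map_sub, hNij, hNij]
    abel
end
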